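/- Let $G$ be a finite simple graph that is $d$-global interval with labelling $[n]$ on $V(G)$. Then $G$ is $(d+1)$-global interval with the same labelling: for every $(d+2)$-subset $\{i_1 < \dots < i_{d+2}\}$ of $[n]$ with $G[i_1, \dots, i_{d+2}]$ connected, and every $j \notin \{i_1, \dots, i_{d+2}\}$ with $i_1 \leq j \leq i_{d+2}$, the induced subgraph $G[i_1, \dots, i_{d+1}, j]$ is connected. -/

import Mathlib

open SimpleGraph Finset


lemma exists_noncut {n : ℕ} (G : SimpleGraph (Fin n)) (s : Finset (Fin n))
    (hconn : (G.induce (↑s : Set (Fin n))).Connected) (u : Fin n) (hu : u ∈ s)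
    (h2 : 2 ≤ s.card) :
    ∃ v ∈ s, v ≠ u ∧ (G.induce (↑(s.erase v) : Set (Fin n))).Connected := by
  classical
  set H := G.induce (↑s : Set (Fin n)) with hH
  have hus : u ∈ (↑s : Set (Fin n)) := by simpa using hu
  set u' : (↑s : Set (Fin n)) := ⟨u, hus⟩ with hu'
  obtain ⟨v', -, hv'max⟩ := Finset.exists_max_image (Finset.univ : Finset (↑s : Set (Fin n)))
    (H.dist u') ⟨u', Finset.mem_univ _⟩
  have hv'max' : ∀ w : (↑s : Set (Fin n)), H.dist u' w ≤ H.dist u' v' :=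
    fun w => hv'max w (Finset.mem_univ _)
  have h1lt : 1 < s.card := by omega
  obtain ⟨w₀, hw₀s, hw₀u⟩ := Finset.exists_mem_ne h1lt u
  set w₀' : (↑s : Set (Fin n)) := ⟨w₀, by simpa using hw₀s⟩ with hw₀'
  have hw₀pos : 0 < H.dist u' w₀' :=
    hconn.pos_dist_of_ne (fun hc => hw₀u (congrArg Subtype.val hc).symm)
  have hvu : v' ≠ u' := by
    intro hcontra
    have hle := hv'max' w₀'
    rw [hcontra] at hle
    rw [SimpleGraph.dist_self] at hle
    omega
  refine ⟨v'.val, by simpa using v'.prop, fun hc => hvu (Subtype.ext (by simpa [hu'] using hc)), ?_⟩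
  have huev : u ∈ (↑(s.erase v') : Set (Fin n)) := by
    simp only [Finset.coe_erase, Set.mem_diff, Set.mem_singleton_iff]
    exact ⟨hus, fun hc => hvu (Subtype.ext hc.symm)⟩
  apply SimpleGraph.induce_connected_of_patches u huev
  intro w hw
  have hws : w ∈ s := by
    simp only [Finset.coe_erase, Set.mem_diff] at hw; exact hw.1
  have hwv : w ≠ v'.val := by
    simp only [Finset.coe_erase, Set.mem_diff, Set.mem_singleton_iff] at hw; exact hw.2
  set w' : (↑s : Set (Fin n)) := ⟨w, by simpa using hws⟩ with hw'
  obtain ⟨p, hp, hplen⟩ := (hconn.preconnected u' w').exists_path_of_dist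
  have hvnot : v' ∉ p.support := by
    intro hmem
    have h1 : H.dist u' v' ≤ (p.takeUntil v' hmem).length := SimpleGraph.dist_le _
    have h2' : H.dist v' w' ≤ (p.dropUntil v' hmem).length := SimpleGraph.dist_le _
    have h3 : (p.takeUntil v' hmem).length + (p.dropUntil v' hmem).length = p.length := by
      conv_rhs => rw [← p.take_spec hmem]
      rw [SimpleGraph.Walk.length_append]
    have h4 : H.dist u' w' ≤ H.dist u' v' := hv'max' w'
    have h5 : H.dist v' w' = 0 := by omega
    have h6 : v' = w' := ((hconn.preconnected v' w').dist_eq_zero_iff).mp h5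
    exact hwv (congrArg Subtype.val h6).symm
  let f : H →g G := ⟨Subtype.val, fun h => h⟩
  let q := p.map f
  refine ⟨{x | x ∈ q.support}, ?_, ?_, ?_, ?_⟩
  · intro x hx
    simp only [Set.mem_setOf_eq, q, SimpleGraph.Walk.support_map, List.mem_map] at hx
    obtain ⟨y, hy, rfl⟩ := hx
    simp only [Finset.coe_erase, Set.mem_diff, Set.mem_singleton_iff]
    exact ⟨y.prop, fun hc => hvnot (Subtype.ext hc ▸ hy)⟩
  · exact q.start_mem_support
  · exact q.end_mem_support
  · exact (q.connected_induce_support).preconnected _ _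

/-- `G` is `d`-global interval w.r.t. the natural labelling of `Fin n`: for every
`(d+1)`-set `s : i₁ < … < i_{d+1}` inducing a connected subgraph and every `j ∉ s` with
`i₁ ≤ j ≤ i_{d+1}`, replacing the largest vertex of `s` by `j` again induces a connected
subgraph. -/
def GlobalIntervalCondG {n : ℕ} (d : ℕ) (G : SimpleGraph (Fin n)) : Prop :=
  ∀ s : Finset (Fin n), s.card = d + 1 → (G.induce (↑s : Set (Fin n))).Connected →
    ∀ j : Fin n, j ∉ s → (∃ a ∈ s, a ≤ j) → (∃ b ∈ s, j ≤ b) →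
      ∀ b ∈ s, (∀ c ∈ s, c ≤ b) →
        (G.induce (↑(insert j (s.erase b)) : Set (Fin n))).Connected

/-- a `d`-global interval graph (`d ≥ 1`) is `(d+1)`-global interval with
the same labelling. -/
theorem stmt_9 (d n : ℕ) (hd : 1 ≤ d) (G : SimpleGraph (Fin n))
    (h : GlobalIntervalCondG d G) : GlobalIntervalCondG (d + 1) G := by
  classical
  intro s hcard hconn j hj hjlow hjhigh b hb hbmax
  have hs2 : 2 ≤ s.card := by omega
  have hsne : s.Nonempty := Finset.card_pos.mp (by omega)
  set m := s.min' hsne with hm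
  have hms : m ∈ s := s.min'_mem hsne
  have hmle : ∀ c ∈ s, m ≤ c := fun c hc => s.min'_le c hc
  have hmj : m ≤ j := by obtain ⟨a, has, haj⟩ := hjlow; exact le_trans (hmle a has) haj
  have hjb : j ≤ b := by obtain ⟨c, hcs, hc⟩ := hjhigh; exact le_trans hc (hbmax c hcs)
  have hmb : m ≠ b := by
    intro hcontra
    have hone : s.card ≤ 1 := Finset.card_le_one.mpr (fun a ha a' ha' =>
      le_antisymm (le_trans (hbmax a ha) (hcontra ▸ hmle a' ha'))
        (le_trans (hbmax a' ha') (hcontra ▸ hmle a ha)))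
    omega
  have hcard_eb : (s.erase b).card = d + 1 := by
    rw [Finset.card_erase_of_mem hb]; omega
  -- Step A : s.erase b induces a connected graph
  obtain ⟨v, hvs, hvm, hvconn⟩ := exists_noncut G s hconn m hms hs2
  have hcard_ev : (s.erase v).card = d + 1 := by
    rw [Finset.card_erase_of_mem hvs]; omega
  have hA : (G.induce (↑(s.erase b) : Set (Fin n))).Connected := by
    by_cases hvb : v = b
    · subst hvb; exact hvconn
    · have hbev : b ∈ s.erase v := Finset.mem_erase.mpr ⟨Ne.symm hvb, hb⟩
      have hres := h (s.erase v) hcard_ev hvconn v (Finset.notMem_erase v s)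
        ⟨m, Finset.mem_erase.mpr ⟨Ne.symm hvm, hms⟩, hmle v hvs⟩
        ⟨b, hbev, hbmax v hvs⟩ b hbev (fun c hc => hbmax c (Finset.mem_of_mem_erase hc))
      have heq : insert v ((s.erase v).erase b) = s.erase b := by
        rw [Finset.erase_right_comm]
        exact Finset.insert_erase (Finset.mem_erase.mpr ⟨hvb, hvs⟩)
      rwa [heq] at hres
  -- Step B : find y with insert j ((s.erase b).erase y) connected
  have hebne : (s.erase b).Nonempty := Finset.card_pos.mp (by omega)
  have key : ∃ y ∈ s.erase b,
      (G.induce (↑(insert j ((s.erase b).erase y)) : Set (Fin n))).Connected := by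
    by_cases hcase : ∃ c ∈ s.erase b, j ≤ c
    · refine ⟨(s.erase b).max' hebne, (s.erase b).max'_mem hebne, ?_⟩
      exact h (s.erase b) hcard_eb hA j (fun hc => hj (Finset.mem_of_mem_erase hc))
        ⟨m, Finset.mem_erase.mpr ⟨hmb, hms⟩, hmj⟩ hcase
        ((s.erase b).max' hebne) ((s.erase b).max'_mem hebne)
        (fun c hc => (s.erase b).le_max' c hc)
    · push_neg at hcase
      obtain ⟨x, hxs, hxb, hxconn⟩ := exists_noncut G s hconn b hb hs2
      have hcard_ex : (s.erase x).card = d + 1 := by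
        rw [Finset.card_erase_of_mem hxs]; omega
      have hbex : b ∈ s.erase x := Finset.mem_erase.mpr ⟨Ne.symm hxb, hb⟩
      have hyne : ((s.erase x).erase b).Nonempty := Finset.card_pos.mp (by
        rw [Finset.card_erase_of_mem hbex, hcard_ex]; omega)
      obtain ⟨y₀, hy₀⟩ := hyne
      have hy₀eb : y₀ ∈ s.erase b := Finset.mem_erase.mpr
        ⟨(Finset.mem_erase.mp hy₀).1,
         Finset.mem_of_mem_erase (Finset.mem_of_mem_erase hy₀)⟩
      refine ⟨x, Finset.mem_erase.mpr ⟨hxb, hxs⟩, ?_⟩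
      have hres := h (s.erase x) hcard_ex hxconn j (fun hc => hj (Finset.mem_of_mem_erase hc))
        ⟨y₀, Finset.mem_of_mem_erase hy₀, le_of_lt (hcase y₀ hy₀eb)⟩
        ⟨b, hbex, hjb⟩ b hbex (fun c hc => hbmax c (Finset.mem_of_mem_erase hc))
      rwa [Finset.erase_right_comm] at hres
  obtain ⟨y, hy, hC⟩ := key
  -- Finish: union of two connected induced subgraphs
  have hznon : ((s.erase b).erase y).Nonempty := Finset.card_pos.mp (by
    rw [Finset.card_erase_of_mem hy, hcard_eb]; omega)
  obtain ⟨z, hz⟩ := hznon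
  have hunion : (↑(s.erase b) : Set (Fin n)) ∪ ↑(insert j ((s.erase b).erase y))
      = ↑(insert j (s.erase b)) := by
    have : (s.erase b) ∪ insert j ((s.erase b).erase y) = insert j (s.erase b) := by
      ext a
      simp only [Finset.mem_union, Finset.mem_insert, Finset.mem_erase]
      tauto
    rw [← Finset.coe_union, this]
  have hint : ((↑(s.erase b) : Set (Fin n)) ∩ ↑(insert j ((s.erase b).erase y))).Nonempty := by
    exact ⟨z, Finset.mem_coe.mpr (Finset.mem_of_mem_erase hz),
      Finset.mem_coe.mpr (Finset.mem_insert_of_mem hz)⟩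
  have hfin := SimpleGraph.induce_union_connected hA.preconnected hC.preconnected hint
  rwa [hunion] at hfin
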